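/- arXiv:2012.04739 — 3 statements merged into one kernel-verified Lean document; each statement's English description precedes it below -/
import Mathlib

section
/- Let G be a two-level tree synchronisation topology of live-reset components with root R and children M1,…,Mn (children pairwise share no actions). If a proposition p is reachable in the sum-of-squares product SQ(G), then p is reachable in the full asynchronous product R || M1 || … || Mn: replacing each square state (s_i, s_R) by the global state having s_R in the root coordinate, s_i in coordinate i, and initial states elsewhere maps runs of SQ(G) to runs of G. -/
/-!
Under `globalOf`, a step of child `i` alone moves only coordinate `i`, because the children share
no actions; a root-local step moves only the root. An upstream synchronisation resets child
`i`, so its target is the global state with every child initial, whichever child then takes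
control. Hence, after the initial `ε`-step, every run of `SQ(G)` is mapped to a run of the full
product, and labels are preserved.
-/

/-- A Labelled Transition System. -/
structure LTS (S A P : Type) where
  init : S
  acts : Set A
  tr : S → A → S → Prop
  label : S → Set P

namespace LTS

/-- Transition relation of the asynchronous product of two LTSs. -/
def asyncTr {S1 S2 A P : Type} (M1 : LTS S1 A P) (M2 : LTS S2 A P) :
    S1 × S2 → A → S1 × S2 → Prop := fun s a s' =>
  (a ∈ M1.acts ∧ a ∉ M2.acts ∧ M1.tr s.1 a s'.1 ∧ s'.2 = s.2) ∨
  (a ∈ M2.acts ∧ a ∉ M1.acts ∧ M2.tr s.2 a s'.2 ∧ s'.1 = s.1) ∨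
  (a ∈ M1.acts ∧ a ∈ M2.acts ∧ M1.tr s.1 a s'.1 ∧ M2.tr s.2 a s'.2)

/-- Asynchronous product of two LTSs. -/
def asyncProd {S1 S2 A P : Type} (M1 : LTS S1 A P) (M2 : LTS S2 A P) :
    LTS (S1 × S2) A P where
  init := (M1.init, M2.init)
  acts := M1.acts ∪ M2.acts
  tr := asyncTr M1 M2
  label := fun s => M1.label s.1 ∪ M2.label s.2

/-- One step of an LTS (via some action of the LTS). -/
def Step {S A P : Type} (M : LTS S A P) (s s' : S) : Prop :=
  ∃ a ∈ M.acts, M.tr s a s'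

/-- Finite reachability from the initial state. -/
def Reachable {S A P : Type} (M : LTS S A P) (s : S) : Prop :=
  Relation.ReflTransGen M.Step M.init s

/-- `ρ, α` form an infinite run of `M`. -/
def IsRun {S A P : Type} (M : LTS S A P) (ρ : ℕ → S) (α : ℕ → A) : Prop :=
  ∀ n, α n ∈ M.acts ∧ M.tr (ρ n) (α n) (ρ (n + 1))

/-- `EF p`: some infinite run from the initial state visits a state labelled `p`. -/
def EF {S A P : Type} (M : LTS S A P) (p : P) : Prop :=
  ∃ ρ α, ρ 0 = M.init ∧ M.IsRun ρ α ∧ ∃ n, p ∈ M.label (ρ n)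

/-- `EG p`: some infinite run from the initial state has `p` at every state. -/
def EG {S A P : Type} (M : LTS S A P) (p : P) : Prop :=
  ∃ ρ α, ρ 0 = M.init ∧ M.IsRun ρ α ∧ ∀ n, p ∈ M.label (ρ n)

/-- A state is locked w.r.t. a set `B` of actions iff no infinite run from it
fires an action from `B`. -/
def LockedWrt {S A P : Type} (M : LTS S A P) (B : Set A) (s : S) : Prop :=
  ¬ ∃ (ρ : ℕ → S) (α : ℕ → A), ρ 0 = s ∧ M.IsRun ρ α ∧ ∃ n, α n ∈ B

end LTS

section TwoLevel

variable {SR A P : Type} {n : ℕ} {T : Fin n → Type}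

/-- Transition relation of the asynchronous product of a root `R` and children `N`. -/
def netTr (R : LTS SR A P) (N : ∀ i, LTS (T i) A P) :
    (SR × ∀ i, T i) → A → (SR × ∀ i, T i) → Prop := fun s a s' =>
  (a ∈ R.acts ∨ ∃ i, a ∈ (N i).acts) ∧
  ((a ∈ R.acts ∧ R.tr s.1 a s'.1) ∨ (a ∉ R.acts ∧ s'.1 = s.1)) ∧
  ∀ i, (a ∈ (N i).acts ∧ (N i).tr (s.2 i) a (s'.2 i)) ∨ (a ∉ (N i).acts ∧ s'.2 i = s.2 i)

/-- Asynchronous product of the whole two-level network `R ‖ N 0 ‖ … ‖ N (n-1)`. -/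
def netLTS (R : LTS SR A P) (N : ∀ i, LTS (T i) A P) : LTS (SR × ∀ i, T i) A P where
  init := (R.init, fun i => (N i).init)
  acts := R.acts ∪ ⋃ i, (N i).acts
  tr := netTr R N
  label := fun s => R.label s.1 ∪ ⋃ i, (N i).label (s.2 i)

/-- A child is live-reset w.r.t. its parent: every transition over a shared
(upstream) action leads to the child's initial state. -/
def LiveResetChild {T0 : Type} (R : LTS SR A P) (M : LTS T0 A P) : Prop :=
  ∀ s a s', a ∈ M.acts → a ∈ R.acts → M.tr s a s' → s' = M.init

/-- Children pairwise share no actions. -/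
def ChildrenDisjoint (N : ∀ i, LTS (T i) A P) : Prop :=
  ∀ i j, i ≠ j → Disjoint (N i).acts (N j).acts

/-- Transition relation of the unreduced sum-of-squares product.  `ε` is the
fresh silent action; `none` is the fresh initial state. -/
def squTr (ε : A) (R : LTS SR A P) (N : ∀ i, LTS (T i) A P) :
    Option (Σ i, T i × SR) → A → Option (Σ i, T i × SR) → Prop := fun s a s' =>
  (s = none ∧ a = ε ∧ ∃ i, s' = some ⟨i, ((N i).init, R.init)⟩) ∨
  (∃ i si sr, s = some ⟨i, (si, sr)⟩ ∧
    ( -- local action of the child `i`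
      (a ∈ (N i).acts ∧ a ∉ R.acts ∧
        ∃ si', (N i).tr si a si' ∧ s' = some ⟨i, (si', sr)⟩) ∨
      -- local action of the root
      (a ∈ R.acts ∧ (∀ j, a ∉ (N j).acts) ∧
        ∃ sr', R.tr sr a sr' ∧ s' = some ⟨i, (si, sr')⟩) ∨
      -- upstream synchronisation of child `i` with the root, releasing control
      (a ∈ (N i).acts ∧ a ∈ R.acts ∧ (N i).tr si a (N i).init ∧
        ∃ sr' j, R.tr sr a sr' ∧ s' = some ⟨j, ((N j).init, sr')⟩)))

/-- The unreduced sum-of-squares product `SQᵘ(G)`. -/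
def SQu (ε : A) (R : LTS SR A P) (N : ∀ i, LTS (T i) A P) :
    LTS (Option (Σ i, T i × SR)) A P where
  init := none
  acts := insert ε (R.acts ∪ ⋃ i, (N i).acts)
  tr := squTr ε R N
  label := fun s => match s with
    | none => ∅
    | some ⟨i, (si, sr)⟩ => (N i).label si ∪ R.label sr

/-- The sum-of-squares product `SQ(G)`: `SQᵘ(G)` with the locked states removed
(transitions are restricted to non-locked endpoints). -/
def SQ (ε : A) (R : LTS SR A P) (N : ∀ i, LTS (T i) A P) :
    LTS (Option (Σ i, T i × SR)) A P :=
  { SQu ε R N with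
    tr := fun s a s' => (SQu ε R N).tr s a s' ∧
      ¬ (SQu ε R N).LockedWrt R.acts s ∧ ¬ (SQu ε R N).LockedWrt R.acts s' }

/-- `cmpl M U`: redirect every transition labelled by an action of `U`
(the upstream actions of the root) to the initial state. -/
def cmpl {S : Type} (M : LTS S A P) (U : Set A) : LTS S A P :=
  { M with
    tr := fun s a s' =>
      (a ∉ U ∧ M.tr s a s') ∨ (a ∈ U ∧ (∃ t, M.tr s a t) ∧ s' = M.init) }

end TwoLevel

/-- The global state of the full product corresponding to a square state:
`s_R` at the root coordinate, `s_i` at coordinate `i`, initial states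
elsewhere. -/
def globalOf {n : ℕ} {SR A P : Type} {T : Fin n → Type}
    (R : LTS SR A P) (N : ∀ i, LTS (T i) A P)
    (i : Fin n) (si : T i) (sr : SR) : SR × ∀ j, T j :=
  (sr, Function.update (fun j => (N j).init) i si)

section Simulation

variable {SR A P : Type} {n : ℕ} {T : Fin n → Type} (R : LTS SR A P) (N : ∀ i, LTS (T i) A P)

def sqToNet : Option (Σ i, T i × SR) → SR × ∀ j, T j
  | none => (netLTS R N).init
  | some ⟨i, (si, sr)⟩ => globalOf R N i si sr

theorem globalOf_init (i : Fin n) (sr : SR) :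
    globalOf R N i (N i).init sr = (sr, fun j => (N j).init) :=
  congrArg _ (Function.update_eq_self _ _)

variable {R N}

theorem squTr_none {ε a : A} {s' : Option (Σ i, T i × SR)} (h : squTr ε R N none a s') :
    ∃ i, s' = some ⟨i, ((N i).init, R.init)⟩ := by
  rcases h with ⟨-, -, h⟩ | ⟨_, _, _, h, -⟩
  · exact h
  · exact absurd h.symm (Option.some_ne_none _)

theorem squTr_ne_none {ε a : A} {s s' : Option (Σ i, T i × SR)} (h : squTr ε R N s a s') :
    s' ≠ none := by
  rcases h with ⟨-, -, _, rfl⟩ | ⟨_, _, _, -, ⟨-, -, _, -, rfl⟩ | ⟨-, -, _, -, rfl⟩ |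
    ⟨-, -, -, _, _, -, rfl⟩⟩ <;> exact Option.some_ne_none _

theorem netTr_globalOf_of_mem_child_acts (hdisj : ChildrenDisjoint N) {a : A} {i : Fin n}
    {si si' : T i} {sr sr' : SR} (hi : a ∈ (N i).acts)
    (hroot : (a ∈ R.acts ∧ R.tr sr a sr') ∨ (a ∉ R.acts ∧ sr' = sr))
    (hchild : (N i).tr si a si') :
    netTr R N (globalOf R N i si sr) a (globalOf R N i si' sr') := by
  refine ⟨Or.inr ⟨i, hi⟩, hroot, fun j => ?_⟩
  by_cases hj : j = i
  · subst hj
    exact Or.inl ⟨hi, by simpa [globalOf] using hchild⟩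
  · exact Or.inr ⟨Set.disjoint_right.mp (hdisj j i hj) hi, by simp [globalOf, hj]⟩

theorem netTr_globalOf_of_root_local {a : A} {i : Fin n} {si : T i} {sr sr' : SR}
    (hR : a ∈ R.acts) (hN : ∀ j, a ∉ (N j).acts) (hroot : R.tr sr a sr') :
    netTr R N (globalOf R N i si sr) a (globalOf R N i si sr') :=
  ⟨Or.inl hR, Or.inl ⟨hR, hroot⟩, fun j => Or.inr ⟨hN j, rfl⟩⟩

theorem netLTS_tr_of_squTr (hdisj : ChildrenDisjoint N) {ε a : A}
    {s s' : Option (Σ i, T i × SR)} (h : squTr ε R N s a s') (hs : s ≠ none) :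
    a ∈ (netLTS R N).acts ∧ (netLTS R N).tr (sqToNet R N s) a (sqToNet R N s') := by
  rcases h with ⟨rfl, -⟩ | ⟨i, si, sr, rfl, ⟨hi, hR, si', hchild, rfl⟩ |
    ⟨hR, hN, sr', hroot, rfl⟩ | ⟨hi, hR, hreset, sr', j, hroot, rfl⟩⟩
  · exact absurd rfl hs
  · exact ⟨Or.inr (Set.mem_iUnion.mpr ⟨i, hi⟩),
      netTr_globalOf_of_mem_child_acts hdisj hi (Or.inr ⟨hR, rfl⟩) hchild⟩
  · exact ⟨Or.inl hR, netTr_globalOf_of_root_local hR hN hroot⟩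
  · -- after a reset every child is initial, whichever one holds control
    have hglobal : globalOf R N j (N j).init sr' = globalOf R N i (N i).init sr' := by
      rw [globalOf_init, globalOf_init]
    refine ⟨Or.inl hR, ?_⟩
    change netTr R N _ a (globalOf R N j (N j).init sr')
    rw [hglobal]
    exact netTr_globalOf_of_mem_child_acts hdisj hi (Or.inl ⟨hR, hroot⟩) hreset

theorem SQu_label_subset_netLTS_label {ε : A} (s : Option (Σ i, T i × SR)) :
    (SQu ε R N).label s ⊆ (netLTS R N).label (sqToNet R N s) := by
  rcases s with _ | ⟨i, si, sr⟩
  · exact Set.empty_subset _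
  · rintro p (hp | hp)
    · exact Or.inr (Set.mem_iUnion.mpr ⟨i, by simpa [sqToNet, globalOf] using hp⟩)
    · exact Or.inl hp

theorem isRun_SQu_of_isRun_SQ {ε : A} {ρ : ℕ → Option (Σ i, T i × SR)} {α : ℕ → A}
    (h : (SQ ε R N).IsRun ρ α) : (SQu ε R N).IsRun ρ α :=
  fun k => ⟨(h k).1, (h k).2.1⟩

/-- The witness run drops the initial `ε`-step and maps states by `sqToNet`. -/
theorem netLTS_EF_of_SQu_EF (hdisj : ChildrenDisjoint N) {ε : A} {p : P}
    (h : (SQu ε R N).EF p) : (netLTS R N).EF p := by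
  obtain ⟨ρ, α, h0, hrun, m, hp⟩ := h
  have hne_none : ∀ k, ρ (k + 1) ≠ none := fun k => squTr_ne_none (hrun k).2
  obtain ⟨i, h1⟩ := squTr_none (h0 ▸ (hrun 0).2)
  refine ⟨fun k => sqToNet R N (ρ (k + 1)), fun k => α (k + 1), ?_,
    fun k => netLTS_tr_of_squTr hdisj (hrun (k + 1)).2 (hne_none k), ?_⟩
  · simp only [h1]
    exact globalOf_init R N i R.init
  · rcases m with _ | m
    · rw [h0] at hp
      exact absurd hp (Set.notMem_empty p)
    · exact ⟨m, SQu_label_subset_netLTS_label _ hp⟩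

end Simulation

theorem sq_preserves_EF_backward_general {n : ℕ} {SR A P : Type} {T : Fin n → Type}
    (R : LTS SR A P) (N : ∀ i, LTS (T i) A P) (ε : A)
    (hdisj : ChildrenDisjoint N) (p : P) :
    ((SQ ε R N).EF p → (netLTS R N).EF p) ∧
    (∀ (ρ : ℕ → Option (Σ i, T i × SR)) (α : ℕ → A),
      (SQ ε R N).IsRun ρ α →
      (∀ k i si sr, ρ k = some ⟨i, (si, sr)⟩ → α k ≠ ε →
        ∀ i' si' sr', ρ (k + 1) = some ⟨i', (si', sr')⟩ →
          (netLTS R N).tr (globalOf R N i si sr) (α k)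
            (globalOf R N i' si' sr'))) := by
  refine ⟨fun ⟨ρ, α, h0, hrun, hp⟩ => netLTS_EF_of_SQu_EF hdisj
    ⟨ρ, α, h0, isRun_SQu_of_isRun_SQ hrun, hp⟩, ?_⟩
  intro ρ α hrun k i si sr hk _ i' si' sr' hk1
  have hstep := (hrun k).2.1
  rw [hk, hk1] at hstep
  exact (netLTS_tr_of_squTr hdisj hstep (Option.some_ne_none _)).2

/-- for a two-level live-reset tree topology whose children
pairwise share no actions, if `p` is reachable in the sum-of-squares product
`SQ(G)` then `p` is reachable in the full asynchronous product; indeed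
replacing each square state `(s_i, s_R)` by the corresponding global state
maps runs of `SQ(G)` to runs of the full product. -/
theorem sq_preserves_EF_backward {n : ℕ} {SR A P : Type} {T : Fin n → Type}
    (R : LTS SR A P) (N : ∀ i, LTS (T i) A P) (ε : A)
    (hε : ε ∉ R.acts ∪ ⋃ i, (N i).acts)
    (hlr : ∀ i, LiveResetChild R (N i))
    (hdisj : ChildrenDisjoint N) (p : P) :
    ((SQ ε R N).EF p → (netLTS R N).EF p) ∧
    (∀ (ρ : ℕ → Option (Σ i, T i × SR)) (α : ℕ → A),
      (SQ ε R N).IsRun ρ α →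
      (∀ k i si sr, ρ k = some ⟨i, (si, sr)⟩ → α k ≠ ε →
        ∀ i' si' sr', ρ (k + 1) = some ⟨i', (si', sr')⟩ →
          (netLTS R N).tr (globalOf R N i si sr) (α k)
            (globalOf R N i' si' sr'))) :=
  sq_preserves_EF_backward_general R N ε hdisj p
end

section
/- Reachability of conjunctions is not preserved by the sum-of-squares reduction: there exists a two-level live-reset tree topology G and propositions p, q such that the full asynchronous product satisfies EF(p ∧ q) but SQ(G) does not satisfy EF(p ∧ q). -/
/-! Take a root without actions or labels and children `i` that each own one local action,
raising a flag labelled `i`. In the network all flags can be raised one after the other, but a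
state of `SQ(G)` holds the state of a single child next to the root's, so its label has at most
one element. -/

section TwoLevel

variable {SR A P : Type} {n : ℕ} {T : Fin n → Type}

theorem netTr_update_of_local {R : LTS SR A P} {N : ∀ i, LTS (T i) A P}
    {s : SR × ∀ i, T i} {a : A} {i : Fin n} {t : T i}
    (hi : a ∈ (N i).acts) (hR : a ∉ R.acts) (hN : ∀ j ≠ i, a ∉ (N j).acts)
    (htr : (N i).tr (s.2 i) a t) :
    netTr R N s a (s.1, Function.update s.2 i t) := by
  refine ⟨Or.inr ⟨i, hi⟩, Or.inr ⟨hR, rfl⟩, fun j => ?_⟩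
  by_cases hji : j = i
  · subst hji
    exact Or.inl ⟨hi, by simpa using htr⟩
  · exact Or.inr ⟨hN j hji, by simp [hji]⟩

theorem SQ_label_subsingleton {ε : A} {R : LTS SR A P} {N : ∀ i, LTS (T i) A P}
    (hR : ∀ s, R.label s = ∅) (hN : ∀ i s, ((N i).label s).Subsingleton)
    (s : Option (Σ i, T i × SR)) : ((SQ ε R N).label s).Subsingleton := by
  rcases s with _ | ⟨i, si, sr⟩
  · exact Set.subsingleton_empty
  · simpa [SQ, SQu, hR] using hN i si

end TwoLevel

namespace FlagNet

variable {n : ℕ}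

def root : LTS Unit (Option (Fin n)) (Fin n) :=
  ⟨(), ∅, fun _ _ _ => False, fun _ => ∅⟩

def child (i : Fin n) : LTS Bool (Option (Fin n)) (Fin n) :=
  ⟨false, {some i}, fun _ a _ => a = some i, fun b => if b then {i} else ∅⟩

theorem none_notMem_acts :
    none ∉ (root : LTS Unit (Option (Fin n)) (Fin n)).acts ∪ ⋃ i, (child i).acts := by
  simp [root, child]

theorem liveResetChild (i : Fin n) : LiveResetChild root (child i) :=
  fun _ _ _ _ hR _ => absurd hR (Set.notMem_empty _)

theorem childrenDisjoint : ChildrenDisjoint (child (n := n)) := by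
  intro i j hij
  simpa [child] using hij

theorem child_label_subsingleton (i : Fin n) (b : Bool) : ((child i).label b).Subsingleton := by
  cases b <;> simp [child]

/-- Raise flag `0` first, then keep firing the action of child `1`. -/
theorem net_isRun :
    (netLTS root child).IsRun (fun k => ((), fun j : Fin 2 => decide (j.val < k)))
      (fun k => some (if k = 0 then 0 else 1)) := by
  intro k
  set i : Fin 2 := if k = 0 then 0 else 1
  have hflags : (fun j : Fin 2 => decide (j.val < k + 1)) =
      Function.update (fun j : Fin 2 => decide (j.val < k)) i true := by
    funext j
    fin_cases j <;> by_cases hk : k = 0 <;> simp [i, hk, Function.update] <;> omega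
  refine ⟨Or.inr (Set.mem_iUnion.2 ⟨i, rfl⟩), ?_⟩
  show netTr root child ((), fun j : Fin 2 => decide (j.val < k)) (some i)
    ((), fun j : Fin 2 => decide (j.val < k + 1))
  rw [hflags]
  exact netTr_update_of_local rfl (Set.notMem_empty _)
    (fun j hj => by simpa [child, eq_comm] using hj) rfl

end FlagNet

open FlagNet in
/-- reachability of conjunctions is not preserved by the
sum-of-squares reduction: there is a two-level live-reset tree topology and
propositions `p, q` such that the full asynchronous product satisfies
`EF (p ∧ q)` (some reachable state's label contains both `p` and `q`)
but `SQ(G)` does not. -/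
theorem sq_does_not_preserve_EF_conj :
    ∃ (SR : Type) (T : Fin 2 → Type) (A P : Type)
      (R : LTS SR A P) (N : ∀ i, LTS (T i) A P) (ε : A) (p q : P),
      ε ∉ R.acts ∪ ⋃ i, (N i).acts ∧
      (∀ i, LiveResetChild R (N i)) ∧
      ChildrenDisjoint N ∧
      (∃ ρ α, ρ 0 = (netLTS R N).init ∧ (netLTS R N).IsRun ρ α ∧
        ∃ k, p ∈ (netLTS R N).label (ρ k) ∧ q ∈ (netLTS R N).label (ρ k)) ∧
      ¬ (∃ ρ α, ρ 0 = (SQ ε R N).init ∧ (SQ ε R N).IsRun ρ α ∧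
        ∃ k, p ∈ (SQ ε R N).label (ρ k) ∧ q ∈ (SQ ε R N).label (ρ k)) := by
  refine ⟨Unit, fun _ => Bool, Option (Fin 2), Fin 2, root, child, none, 0, 1,
    none_notMem_acts, liveResetChild, childrenDisjoint, ⟨_, _, ?_, net_isRun, 2, ?_, ?_⟩, ?_⟩
  · simp [netLTS, root, child]
  · exact Or.inr (Set.mem_iUnion.2 ⟨0, by simp [child]⟩)
  · exact Or.inr (Set.mem_iUnion.2 ⟨1, by simp [child]⟩)
  · rintro ⟨ρ, -, -, -, k, hp, hq⟩
    exact absurd (SQ_label_subsingleton (fun _ => rfl) child_label_subsingleton _ hp hq)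
      (by decide)
end

section
/- In a two-level live-reset tree topology where children pairwise share no actions, between two consecutive root-synchronisations of a run, the states of all children except the one about to synchronise can be assumed initial: formally, if a global state s is reachable and the child coordinate i of s equals some s_i reachable in M_i using only local actions of M_i, then the state with root coordinate s_R (the root coordinate of s), coordinate i equal to s_i, and all other children at their initial states is also reachable in the full product. -/
/-- Reachability inside a child using only its local (unshared) actions. -/
def LocalReach {SR A P T0 : Type} (R : LTS SR A P) (M : LTS T0 A P) (s : T0) : Prop :=
  Relation.ReflTransGen (fun x y => ∃ a ∈ M.acts, a ∉ R.acts ∧ M.tr x a y) M.init s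

/-!
Every child coordinate of a reachable state is reachable in its own component by local
actions alone, since an upstream synchronisation resets the child to its initial state.
Now follow a run and keep, for each child `i`, a witness run ending in the root state of
the current global state with every child but `i` initial. A local step of `i` or a step
of the root alone extends the witness directly. When another child `k` synchronises with
the root, first replay `k`'s local history from its initial state (it commutes with
everything else, as the children share no actions), then fire the synchronisation, which
returns `k` to its initial state.
-/

section Rescheduling

variable {n : ℕ} {SR A P : Type} {T : Fin n → Type} {R : LTS SR A P} {N : ∀ i, LTS (T i) A P}

def RootMove (R : LTS SR A P) (r : SR) (a : A) (r' : SR) : Prop :=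
  (a ∈ R.acts ∧ R.tr r a r') ∨ (a ∉ R.acts ∧ r' = r)

lemma ChildrenDisjoint.not_mem (hdisj : ChildrenDisjoint N) {a : A} {j k : Fin n}
    (hk : a ∈ (N k).acts) (hjk : j ≠ k) : a ∉ (N j).acts :=
  fun hj => Set.disjoint_left.mp (hdisj j k hjk) hj hk

lemma netTr_iff_of_mem_acts (hdisj : ChildrenDisjoint N) {a : A} {k : Fin n}
    (hk : a ∈ (N k).acts) {b c : SR × ∀ i, T i} :
    netTr R N b a c ↔
      RootMove R b.1 a c.1 ∧ (N k).tr (b.2 k) a (c.2 k) ∧ ∀ j ≠ k, c.2 j = b.2 j := by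
  constructor
  · rintro ⟨-, hroot, hchild⟩
    exact ⟨hroot, ((hchild k).resolve_right fun h => h.1 hk).2,
      fun j hj => ((hchild j).resolve_left fun h => hdisj.not_mem hk hj h.1).2⟩
  · rintro ⟨hroot, htrk, hrest⟩
    refine ⟨Or.inr ⟨k, hk⟩, hroot, fun j => ?_⟩
    by_cases hj : j = k
    · subst hj
      exact Or.inl ⟨hk, htrk⟩
    · exact Or.inr ⟨hdisj.not_mem hk hj, hrest j hj⟩

lemma netTr_iff_of_forall_not_mem_acts {a : A} (ha : ∀ j, a ∉ (N j).acts)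
    {b c : SR × ∀ i, T i} :
    netTr R N b a c ↔ a ∈ R.acts ∧ R.tr b.1 a c.1 ∧ c.2 = b.2 := by
  constructor
  · rintro ⟨hacts, hroot, hchild⟩
    have haR : a ∈ R.acts := hacts.resolve_right fun ⟨j, hj⟩ => ha j hj
    exact ⟨haR, (hroot.resolve_right fun h => h.1 haR).2,
      funext fun j => ((hchild j).resolve_left fun h => ha j h.1).2⟩
  · rintro ⟨haR, hR, hc⟩
    exact ⟨Or.inl haR, Or.inl ⟨haR, hR⟩, fun j => Or.inr ⟨ha j, congrFun hc j⟩⟩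

lemma netLTS_step_update (hdisj : ChildrenDisjoint N) {a : A} {k : Fin n}
    (hk : a ∈ (N k).acts) {r r' : SR} (hroot : RootMove R r a r') {x y : T k}
    (htr : (N k).tr x a y) (f : ∀ i, T i) :
    (netLTS R N).Step (r, Function.update f k x) (r', Function.update f k y) :=
  ⟨a, Or.inr (Set.mem_iUnion.2 ⟨k, hk⟩), (netTr_iff_of_mem_acts hdisj hk).2
    ⟨hroot, by simpa using htr, fun j hj => by simp [Function.update_of_ne hj]⟩⟩

lemma netLTS_reflTransGen_of_localReach (hdisj : ChildrenDisjoint N) {k : Fin n} {x : T k}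
    (hx : LocalReach R (N k) x) (r : SR) {f : ∀ i, T i} (hf : f k = (N k).init) :
    Relation.ReflTransGen (netLTS R N).Step (r, f) (r, Function.update f k x) := by
  have hlift : Relation.ReflTransGen (netLTS R N).Step
      (r, Function.update f k (N k).init) (r, Function.update f k x) :=
    hx.lift (fun y => (r, Function.update f k y))
    fun _ _ ⟨_, hk, haR, htr⟩ => netLTS_step_update hdisj hk (Or.inr ⟨haR, rfl⟩) htr f
  rwa [← hf, Function.update_eq_self] at hlift

lemma localReach_of_reachable (hlr : ∀ i, LiveResetChild R (N i)) {s : SR × ∀ i, T i}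
    (hs : (netLTS R N).Reachable s) (j : Fin n) : LocalReach R (N j) (s.2 j) := by
  induction hs with
  | refl => exact .refl
  | tail _ hstep ih =>
    obtain ⟨a, -, -, -, hchild⟩ := hstep
    rcases hchild j with ⟨haj, htr⟩ | ⟨-, hunchanged⟩
    · by_cases haR : a ∈ R.acts
      · rw [hlr j _ _ _ haj haR htr]
        exact .refl
      · exact ih.tail ⟨a, haj, haR, htr⟩
    · rwa [hunchanged]

theorem reachable_update_init_of_reachable (hlr : ∀ i, LiveResetChild R (N i))
    (hdisj : ChildrenDisjoint N) {s : SR × ∀ i, T i} (hs : (netLTS R N).Reachable s)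
    (i : Fin n) :
    (netLTS R N).Reachable (s.1, Function.update (fun j => (N j).init) i (s.2 i)) := by
  induction hs with
  | refl =>
    change (netLTS R N).Reachable (R.init, Function.update (fun j => (N j).init) i (N i).init)
    rw [Function.update_eq_self]
    exact .refl
  | @tail b c hb hstep ih =>
    obtain ⟨a, -, htr⟩ := hstep
    by_cases hchild : ∃ k, a ∈ (N k).acts
    · obtain ⟨k, hk⟩ := hchild
      obtain ⟨hroot, htrk, hrest⟩ := (netTr_iff_of_mem_acts hdisj hk).1 htr
      by_cases hki : k = i
      · subst hki
        exact ih.tail (netLTS_step_update hdisj hk hroot htrk _)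
      rw [hrest i (Ne.symm hki)]
      rcases hroot with ⟨haR, hR⟩ | ⟨-, hr⟩
      · set f := Function.update (fun j => (N j).init) i (b.2 i)
        have hfk : f k = (N k).init := Function.update_of_ne hki _ _
        have hreplay := ih.trans
          (netLTS_reflTransGen_of_localReach hdisj (localReach_of_reachable hlr hb k) b.1 hfk)
        have hsync := hreplay.tail
          (netLTS_step_update hdisj hk (Or.inl ⟨haR, hR⟩) htrk f)
        rwa [hlr k _ _ _ hk haR htrk, ← hfk, Function.update_eq_self] at hsync
      · rwa [hr]
    · push Not at hchild
      obtain ⟨haR, hR, hc⟩ := (netTr_iff_of_forall_not_mem_acts hchild).1 htr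
      rw [hc]
      exact ih.tail ⟨a, Or.inl haR, (netTr_iff_of_forall_not_mem_acts hchild).2 ⟨haR, hR, rfl⟩⟩

end Rescheduling

theorem reschedule_one_child_general {n : ℕ} {SR A P : Type} {T : Fin n → Type}
    (R : LTS SR A P) (N : ∀ i, LTS (T i) A P)
    (hlr : ∀ i, LiveResetChild R (N i))
    (hdisj : ChildrenDisjoint N)
    (s : SR × ∀ i, T i) (i : Fin n)
    (hs : (netLTS R N).Reachable s) :
    (netLTS R N).Reachable
      (s.1, Function.update (fun j => (N j).init) i (s.2 i)) :=
  reachable_update_init_of_reachable hlr hdisj hs i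

/-- in a two-level live-reset tree topology with children
pairwise sharing no actions, if a global state `s` is reachable, and the
`i`-th coordinate of `s` is reachable in `M i` using only local actions, then
the global state with the same root coordinate, `i`-th coordinate `s.2 i`, and
all other children in their initial states is also reachable in the full
product. -/
theorem reschedule_one_child {n : ℕ} {SR A P : Type} {T : Fin n → Type}
    (R : LTS SR A P) (N : ∀ i, LTS (T i) A P)
    (hlr : ∀ i, LiveResetChild R (N i))
    (hdisj : ChildrenDisjoint N)
    (s : SR × ∀ i, T i) (i : Fin n)
    (hs : (netLTS R N).Reachable s)
    (hi : LocalReach R (N i) (s.2 i)) :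
    (netLTS R N).Reachable
      (s.1, Function.update (fun j => (N j).init) i (s.2 i)) :=
  reschedule_one_child_general R N hlr hdisj s i hs
end
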